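/- The set of singular points of the hypersurface {f = 0} in ℂ⁷, i.e. the set of x = (x₁,…,x₇) ∈ ℂ⁷ such that f(x) = 0 and all seven partial derivatives ∂f/∂xᵢ(x) vanish, is exactly the set {x ∈ ℂ⁷ : x₇ = 0, x₂x₃ = x₆², x₁x₃ = x₅², x₁x₂ = x₄², x₃x₄ = x₅x₆, x₂x₅ = x₄x₆, x₁x₆ = x₄x₅} (i.e. x₇ = 0 and all 2×2 minors of the symmetric matrix with rows (x₁,x₄,x₅), (x₄,x₂,x₆), (x₅,x₆,x₃) vanish). -/
import Mathlib


open MvPolynomial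

/-- The polynomial f = x₁x₂x₃ + 2x₄x₅x₆ − x₁x₆² − x₂x₅² − x₃x₄² − x₇²,
with variables x₁,…,x₇ indexed by `Fin 7`. -/
noncomputable def fPoly : MvPolynomial (Fin 7) ℂ :=
  X 0 * X 1 * X 2 + 2 * X 3 * X 4 * X 5
    - X 0 * X 5 ^ 2 - X 1 * X 4 ^ 2 - X 2 * X 3 ^ 2 - X 6 ^ 2

lemma pderiv_two (i : Fin 7) : pderiv i (2 : MvPolynomial (Fin 7) ℂ) = 0 := by
  have : (2 : MvPolynomial (Fin 7) ℂ) = ((2 : ℕ) : MvPolynomial (Fin 7) ℂ) := by norm_num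
  rw [this, Derivation.map_natCast]

lemma eval_fPoly (x : Fin 7 → ℂ) :
    eval x fPoly = x 0 * x 1 * x 2 + 2 * (x 3 * x 4 * x 5)
      - x 0 * x 5 ^ 2 - x 1 * x 4 ^ 2 - x 2 * x 3 ^ 2 - x 6 ^ 2 := by
  simp [fPoly]; ring

lemma e0 (x : Fin 7 → ℂ) : eval x (pderiv 0 fPoly) = x 1 * x 2 - x 5 ^ 2 := by
  simp [fPoly, pderiv_mul, pderiv_pow, pderiv_X, pderiv_two]
  all_goals ring

lemma e1 (x : Fin 7 → ℂ) : eval x (pderiv 1 fPoly) = x 0 * x 2 - x 4 ^ 2 := by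
  simp [fPoly, pderiv_mul, pderiv_pow, pderiv_X, pderiv_two]
  all_goals ring

lemma e2 (x : Fin 7 → ℂ) : eval x (pderiv 2 fPoly) = x 0 * x 1 - x 3 ^ 2 := by
  simp [fPoly, pderiv_mul, pderiv_pow, pderiv_X, pderiv_two]
  all_goals ring

lemma e3 (x : Fin 7 → ℂ) : eval x (pderiv 3 fPoly) = 2 * (x 4 * x 5) - 2 * (x 2 * x 3) := by
  simp [fPoly, pderiv_mul, pderiv_pow, pderiv_X, pderiv_two]
  all_goals ring

lemma e4 (x : Fin 7 → ℂ) : eval x (pderiv 4 fPoly) = 2 * (x 3 * x 5) - 2 * (x 1 * x 4) := by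
  simp [fPoly, pderiv_mul, pderiv_pow, pderiv_X, pderiv_two]
  all_goals ring

lemma e5 (x : Fin 7 → ℂ) : eval x (pderiv 5 fPoly) = 2 * (x 3 * x 4) - 2 * (x 0 * x 5) := by
  simp [fPoly, pderiv_mul, pderiv_pow, pderiv_X, pderiv_two]
  all_goals ring

lemma e6 (x : Fin 7 → ℂ) : eval x (pderiv 6 fPoly) = -(2 * x 6) := by
  simp [fPoly, pderiv_mul, pderiv_pow, pderiv_X, pderiv_two]
  all_goals ring

/-- The singular locus of the hypersurface {f = 0} ⊂ ℂ⁷ is exactly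
{x₇ = 0, and all 2×2 minors of the symmetric matrix
(x₁ x₄ x₅ / x₄ x₂ x₆ / x₅ x₆ x₃) vanish}. -/
theorem singular_locus_f (x : Fin 7 → ℂ) :
    (eval x fPoly = 0 ∧ ∀ i : Fin 7, eval x (pderiv i fPoly) = 0) ↔
    (x 6 = 0 ∧ x 1 * x 2 = x 5 ^ 2 ∧ x 0 * x 2 = x 4 ^ 2 ∧ x 0 * x 1 = x 3 ^ 2 ∧
      x 2 * x 3 = x 4 * x 5 ∧ x 1 * x 4 = x 3 * x 5 ∧ x 0 * x 5 = x 3 * x 4) := by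
  constructor
  · rintro ⟨-, hd⟩
    have h0 := hd 0; rw [e0] at h0
    have h1 := hd 1; rw [e1] at h1
    have h2 := hd 2; rw [e2] at h2
    have h3 := hd 3; rw [e3] at h3
    have h4 := hd 4; rw [e4] at h4
    have h5 := hd 5; rw [e5] at h5
    have h6 := hd 6; rw [e6] at h6
    refine ⟨by linear_combination (-1/2 : ℂ) * h6, by linear_combination h0,
      by linear_combination h1, by linear_combination h2,
      by linear_combination (-1/2 : ℂ) * h3, by linear_combination (-1/2 : ℂ) * h4,
      by linear_combination (-1/2 : ℂ) * h5⟩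
  · rintro ⟨hG, hA, hB, hC, hD, hE, hF⟩
    refine ⟨by rw [eval_fPoly]; linear_combination x 0 * hA - x 4 * hE - x 3 * hD - x 6 * hG, ?_⟩
    intro i
    fin_cases i
    · exact (e0 x).trans (by linear_combination hA)
    · exact (e1 x).trans (by linear_combination hB)
    · exact (e2 x).trans (by linear_combination hC)
    · exact (e3 x).trans (by linear_combination (-2 : ℂ) * hD)
    · exact (e4 x).trans (by linear_combination (-2 : ℂ) * hE)
    · exact (e5 x).trans (by linear_combination (-2 : ℂ) * hF)
    · exact (e6 x).trans (by linear_combination (-2 : ℂ) * hG)
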